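/- Let T = (L, R, σ) be a tanglegram of size n ≥ 5. Then the unordered data (L, R) of the underlying trees is determined by the multideck D^m(T): if T' = (L', R', σ') is any tanglegram of size n with D^m(T') = D^m(T), then L' ≅ L and R' ≅ R as rooted binary trees. -/
import Mathlib


/-- A rooted binary tree: every vertex has zero or two children. -/
inductive RBT : Type
  | leaf : RBT
  | node : RBT → RBT → RBT
deriving DecidableEq

namespace RBT
/-- Number of leaves. -/
def numLeaves : RBT → ℕ
  | leaf => 1
  | node l r => l.numLeaves + r.numLeaves

/-- Root-preserving isomorphism of rooted binary trees (children may be swapped). -/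
inductive Iso : RBT → RBT → Prop
  | leaf : Iso leaf leaf
  | node {a b c d : RBT} : Iso a c → Iso b d → Iso (node a b) (node c d)
  | swap {a b c d : RBT} : Iso a d → Iso b c → Iso (node a b) (node c d)
end RBT

/-- A rooted binary tree with natural-number labels on its leaves. -/
inductive LTree : Type
  | leaf : ℕ → LTree
  | node : LTree → LTree → LTree
deriving DecidableEq

namespace LTree

/-- The multiset of leaf labels. -/
def labels : LTree → Multiset ℕ
  | leaf a => {a}
  | node l r => l.labels + r.labels

/-- Relabel the leaves. -/
def map (f : ℕ → ℕ) : LTree → LTree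
  | leaf a => leaf (f a)
  | node l r => node (map f l) (map f r)

/-- Forget the labels, obtaining a plain rooted binary tree. -/
def forget : LTree → RBT
  | leaf _ => .leaf
  | node l r => .node l.forget r.forget

/-- Delete the leaf (or leaves) with label `i`, suppressing the resulting degree-2 vertices;
returns `none` if nothing is left. -/
def del (i : ℕ) : LTree → Option LTree
  | leaf a => if a = i then none else some (leaf a)
  | node l r =>
    match l.del i with
    | none => some r
    | some l' =>
      match r.del i with
      | none => some l'
      | some r' => some (node l' r')

/-- Label-preserving, root-preserving isomorphism of labeled trees (children may be swapped). -/
inductive LIso : LTree → LTree → Prop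
  | leaf (a : ℕ) : LIso (leaf a) (leaf a)
  | node {a b c d : LTree} : LIso a c → LIso b d → LIso (node a b) (node c d)
  | swap {a b c d : LTree} : LIso a d → LIso b c → LIso (node a b) (node c d)

end LTree

/-- A tanglegram is modeled as a pair of labeled trees in which matched leaves carry the same
label: the labels of the left tree are distinct and coincide (as a multiset) with the labels of
the right tree. -/
def IsTgl (p : LTree × LTree) : Prop := p.1.labels.Nodup ∧ p.1.labels = p.2.labels

/-- The size of a tanglegram: its number of matching edges. -/
def tglSize (p : LTree × LTree) : ℕ := Multiset.card p.1.labels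

/-- Tanglegram isomorphism: a relabeling of the matching edges under which the left trees and
the right trees become isomorphic (mapping left root to left root and right root to right
root, and preserving the matching). -/
def TIso (p q : LTree × LTree) : Prop :=
  ∃ π : ℕ ≃ ℕ, LTree.LIso (p.1.map π) q.1 ∧ LTree.LIso (p.2.map π) q.2

/-- The card of a tanglegram obtained by deleting the matched leaf pair with label `i`. -/
def tcard (p : LTree × LTree) (i : ℕ) : LTree × LTree :=
  ((p.1.del i).getD (.leaf 0), (p.2.del i).getD (.leaf 0))

/-- The multideck of a tanglegram: the multiset of cards obtained by deleting one matched leaf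
pair in every possible way. -/
def tdeck (p : LTree × LTree) : Multiset (LTree × LTree) :=
  p.1.labels.map (fun i => tcard p i)

namespace RBT

def code : RBT → ℕ
  | leaf => 0
  | node a b => Nat.pair (code a) (code b) + 1

theorem code_inj : ∀ {a b : RBT}, code a = code b → a = b := by
  intro a
  induction a with
  | leaf => intro b h; cases b <;> simp [code] at h ⊢
  | node x y ihx ihy =>
    intro b h
    cases b with
    | leaf => simp [code] at h
    | node c d =>
      simp only [code, Nat.add_right_cancel_iff, Nat.pair_eq_pair] at h
      rw [ihx h.1, ihy h.2]

def leKey (a b : RBT) : Prop :=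
  numLeaves a < numLeaves b ∨ (numLeaves a = numLeaves b ∧ code a ≤ code b)

instance : ∀ a b, Decidable (leKey a b) := fun a b => by unfold leKey; infer_instance

theorem leKey_total {a b : RBT} (h : ¬ leKey a b) : leKey b a := by
  unfold leKey at *
  push_neg at h
  rcases lt_trichotomy (numLeaves a) (numLeaves b) with h1 | h1 | h1
  · exact absurd h1 (by intro hh; exact absurd hh (by intro hh2; exact absurd (h.1) (by simp [hh2]))) 
  · exact Or.inr ⟨h1.symm, le_of_lt (h.2 h1)⟩
  · exact Or.inl h1

theorem leKey_antisymm {a b : RBT} (h1 : leKey a b) (h2 : leKey b a) : a = b := by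
  unfold leKey at *
  rcases h1 with h1 | ⟨e1, c1⟩
  · rcases h2 with h2 | ⟨e2, _⟩ <;> omega
  · rcases h2 with h2 | ⟨e2, c2⟩
    · omega
    · exact code_inj (le_antisymm c1 c2)

theorem leKey_refl (a : RBT) : leKey a a := Or.inr ⟨rfl, le_rfl⟩

def norm : RBT → RBT
  | leaf => leaf
  | node a b => if leKey (norm a) (norm b) then node (norm a) (norm b) else node (norm b) (norm a)

theorem numLeaves_pos (t : RBT) : 1 ≤ numLeaves t := by
  induction t with
  | leaf => simp [numLeaves]
  | node a b iha ihb => simp [numLeaves]; omega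

theorem numLeaves_eq_one {t : RBT} (h : numLeaves t = 1) : t = leaf := by
  cases t with
  | leaf => rfl
  | node a b => have := numLeaves_pos a; have := numLeaves_pos b; simp [numLeaves] at h; omega

theorem numLeaves_norm (t : RBT) : numLeaves (norm t) = numLeaves t := by
  induction t with
  | leaf => rfl
  | node a b iha ihb =>
    rw [norm]
    split <;> simp [numLeaves, iha, ihb] <;> omega

theorem norm_eq_leaf {t : RBT} : norm t = leaf ↔ t = leaf := by
  cases t with
  | leaf => simp [norm]
  | node a b => rw [norm]; split <;> simp

theorem iso_norm_self (t : RBT) : Iso t (norm t) := by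
  induction t with
  | leaf => exact .leaf
  | node a b iha ihb =>
    rw [norm]; split
    · exact .node iha ihb
    · exact .swap iha ihb

theorem Iso.symm : ∀ {a b : RBT}, Iso a b → Iso b a := by
  intro a b h
  induction h with
  | leaf => exact .leaf
  | node h1 h2 ih1 ih2 => exact .node ih1 ih2
  | swap h1 h2 ih1 ih2 => exact .swap ih2 ih1

theorem Iso.trans : ∀ {a b c : RBT}, Iso a b → Iso b c → Iso a c := by
  intro a b c h1
  induction h1 generalizing c with
  | leaf => exact id
  | node g1 g2 ih1 ih2 =>
    intro h3
    cases h3 with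
    | node f1 f2 => exact .node (ih1 f1) (ih2 f2)
    | swap f1 f2 => exact .swap (ih1 f1) (ih2 f2)
  | swap g1 g2 ih1 ih2 =>
    intro h3
    cases h3 with
    | node f1 f2 => exact .swap (ih1 f2) (ih2 f1)
    | swap f1 f2 => exact .node (ih1 f2) (ih2 f1)

theorem norm_eq_of_iso : ∀ {a b : RBT}, Iso a b → norm a = norm b := by
  intro a b h
  induction h with
  | leaf => rfl
  | node h1 h2 ih1 ih2 => rw [norm, norm, ih1, ih2]
  | @swap a' b' c' d' h1 h2 ih1 ih2 =>
    rw [norm, norm, ih1, ih2]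
    by_cases h1k : leKey (norm d') (norm c') <;> by_cases h2k : leKey (norm c') (norm d')
    · rw [if_pos h1k, if_pos h2k, leKey_antisymm h1k h2k]
    · rw [if_pos h1k, if_neg h2k]
    · rw [if_neg h1k, if_pos h2k]
    · exact absurd (leKey_total h1k) h2k

theorem norm_norm (t : RBT) : norm (norm t) = norm t :=
  (norm_eq_of_iso (iso_norm_self t)).symm

theorem iso_iff_norm {a b : RBT} : Iso a b ↔ norm a = norm b := by
  constructor
  · exact norm_eq_of_iso
  · intro h
    exact (iso_norm_self a).trans (h ▸ (iso_norm_self b).symm)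

theorem norm_node_eq {a b : RBT} (h : norm (node a b) = node a b) :
    norm a = a ∧ norm b = b ∧ leKey a b := by
  rw [norm] at h
  split at h
  · rename_i hk
    injection h with h1 h2
    exact ⟨h1, h2, h1 ▸ h2 ▸ hk⟩
  · rename_i hk
    injection h with h1 h2
    have hab : a = b := by
      have h3 := congrArg norm h2
      rw [norm_norm] at h3
      rw [← h1, ← h3, h2]
    subst hab
    exact ⟨h2, h2, leKey_refl a⟩

theorem leKey_numLeaves {a b : RBT} (h : leKey a b) : numLeaves a ≤ numLeaves b := by
  rcases h with h | ⟨h, _⟩ <;> omega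

theorem norm_node_comm (a b : RBT) : norm (node a b) = norm (node b a) := by
  rw [norm, norm]
  by_cases h1 : leKey (norm a) (norm b) <;> by_cases h2 : leKey (norm b) (norm a)
  · rw [if_pos h1, if_pos h2, leKey_antisymm h1 h2]
  · rw [if_pos h1, if_neg h2]
  · rw [if_neg h1, if_pos h2]
  · exact absurd (leKey_total h1) h2

theorem norm_node_congr {a b c d : RBT} (h1 : norm a = norm c) (h2 : norm b = norm d) :
    norm (node a b) = norm (node c d) := by rw [norm, norm, h1, h2]

theorem norm_node_leaf (t : RBT) : norm (node leaf t) = node leaf (norm t) := by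
  have hk : leKey (norm leaf) (norm t) := by
    by_cases h : norm t = leaf
    · rw [h]; exact leKey_refl leaf
    · left
      show numLeaves leaf < _
      have h1 := numLeaves_pos (norm t)
      have h2 : numLeaves (norm t) ≠ 1 := fun hh => h (numLeaves_eq_one hh)
      simp [numLeaves]; omega
  rw [norm, if_pos hk]; rfl

theorem iso_node_inv {u v c d : RBT} (h : Iso (node u v) (node c d)) :
    (Iso u c ∧ Iso v d) ∨ (Iso u d ∧ Iso v c) := by
  cases h with
  | node h1 h2 => exact Or.inl ⟨h1, h2⟩
  | swap h1 h2 => exact Or.inr ⟨h1, h2⟩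

theorem iso_leaf_iff {a b : RBT} (h : Iso a b) : a = leaf ↔ b = leaf := by
  cases h <;> simp

def deck : RBT → Multiset RBT
  | leaf => {leaf}
  | node a b =>
      (if a = leaf then {b} else (deck a).map (fun x => node x b)) +
      (if b = leaf then {a} else (deck b).map (fun x => node a x))

theorem card_deck (t : RBT) : Multiset.card (deck t) = numLeaves t := by
  induction t with
  | leaf => simp [deck, numLeaves]
  | node a b iha ihb =>
    rw [deck]
    split <;> split <;> rename_i h1 h2 <;>
      simp [numLeaves, iha, ihb, h1, h2] <;> simp_all [numLeaves] <;> omega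

theorem mem_deck_numLeaves : ∀ {t : RBT}, t ≠ leaf → ∀ {C : RBT}, C ∈ deck t →
    numLeaves C = numLeaves t - 1 := by
  intro t
  induction t with
  | leaf => intro h; exact absurd rfl h
  | node a b iha ihb =>
    intro _ C hC
    rw [deck, Multiset.mem_add] at hC
    by_cases ha : a = leaf <;> by_cases hb : b = leaf
    · subst ha; subst hb
      rw [if_pos rfl, if_pos rfl] at hC
      rcases hC with hC | hC <;> rw [Multiset.mem_singleton] at hC <;> subst hC <;>
        simp [numLeaves]
    · subst ha
      rw [if_pos rfl, if_neg hb] at hC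
      rcases hC with hC | hC
      · rw [Multiset.mem_singleton] at hC; subst hC; simp [numLeaves]
      · obtain ⟨x, hx, rfl⟩ := Multiset.mem_map.1 hC
        have := ihb hb hx
        have := numLeaves_pos b
        simp [numLeaves] at *
        omega
    · subst hb
      rw [if_neg ha, if_pos rfl] at hC
      rcases hC with hC | hC
      · obtain ⟨x, hx, rfl⟩ := Multiset.mem_map.1 hC
        have := iha ha hx
        have := numLeaves_pos a
        simp [numLeaves] at *
        omega
      · rw [Multiset.mem_singleton] at hC; subst hC; simp [numLeaves]
    · rw [if_neg ha, if_neg hb] at hC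
      have hpa := numLeaves_pos a
      have hpb := numLeaves_pos b
      rcases hC with hC | hC <;> obtain ⟨x, hx, rfl⟩ := Multiset.mem_map.1 hC
      · have := iha ha hx; simp [numLeaves] at *; omega
      · have := ihb hb hx; simp [numLeaves] at *; omega

/-- `pend S k` attaches `k` pendant leaves above `S`. -/
def pend (S : RBT) : ℕ → RBT
  | 0 => S
  | k + 1 => node leaf (pend S k)

theorem pend_ne_leaf (S : RBT) (k : ℕ) (h : k ≠ 0) : pend S k ≠ leaf := by
  cases k with
  | zero => exact absurd rfl h
  | succ k => simp [pend]

theorem numLeaves_pend (S : RBT) (k : ℕ) : numLeaves (pend S k) = numLeaves S + k := by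
  induction k with
  | zero => simp [pend]
  | succ k ih => simp [pend, numLeaves, ih]; omega

theorem pend_inj {S S' : RBT} (k : ℕ) (h : pend S k = pend S' k) : S = S' := by
  induction k with
  | zero => exact h
  | succ k ih => rw [pend, pend] at h; injection h with _ h; exact ih h

theorem norm_pend (S : RBT) (k : ℕ) : norm (pend S k) = pend (norm S) k := by
  induction k with
  | zero => rfl
  | succ k ih => rw [pend, norm_node_leaf, ih]; rfl

/-- canonical decomposition of a normalized tree into pendant part and base -/
theorem decomp : ∀ {T : RBT}, norm T = T →
    ∃ S k, T = pend S k ∧ norm S = S ∧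
      (S = leaf ∨ ∃ u v, S = node u v ∧ u ≠ leaf ∧ v ≠ leaf) := by
  intro T
  induction T with
  | leaf => intro _; exact ⟨leaf, 0, rfl, rfl, Or.inl rfl⟩
  | node a b iha ihb =>
    intro hT
    obtain ⟨ha, hb, hk⟩ := norm_node_eq hT
    by_cases hal : a = leaf
    · subst hal
      obtain ⟨S, k, h1, h2, h3⟩ := ihb hb
      exact ⟨S, k + 1, by rw [pend, h1], h2, h3⟩
    · have hbl : b ≠ leaf := by
        intro hbl
        subst hbl
        have := leKey_numLeaves hk
        have := numLeaves_pos a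
        have : numLeaves a = 1 := by simp [numLeaves] at *; omega
        exact hal (numLeaves_eq_one this)
      exact ⟨node a b, 0, rfl, hT, Or.inr ⟨a, b, rfl, hal, hbl⟩⟩

theorem deck_pend_leaf (k : ℕ) : deck (pend leaf (k + 1)) = Multiset.replicate (k + 2) (pend leaf k) := by
  induction k with
  | zero => rw [pend, pend, deck]; rfl
  | succ k ih =>
    rw [pend, deck]
    rw [if_pos rfl, if_neg (pend_ne_leaf leaf (k+1) (by omega)), ih, Multiset.map_replicate]
    rw [show (node leaf (pend leaf k)) = pend leaf (k+1) from rfl]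
    rw [show (k + 1 + 2) = (k + 2) + 1 from rfl, Multiset.replicate_succ]
    rfl

theorem deck_pend {S : RBT} (hS : S ≠ leaf) (k : ℕ) :
    deck (pend S (k + 1)) =
      Multiset.replicate (k + 1) (pend S k) + (deck S).map (fun w => pend w (k + 1)) := by
  induction k with
  | zero =>
    show deck (node leaf (pend S 0)) = _
    rw [show pend S 0 = S from rfl, deck, if_pos rfl, if_neg hS]
    rfl
  | succ k ih =>
    show deck (node leaf (pend S (k+1))) = _
    rw [deck, if_pos rfl, if_neg (pend_ne_leaf S (k+1) (by omega)), ih]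
    rw [Multiset.map_add, Multiset.map_replicate, Multiset.map_map]
    rw [show node leaf (pend S k) = pend S (k + 1) from rfl]
    rw [← add_assoc, Multiset.singleton_add, ← Multiset.replicate_succ]
    rfl

def isCat : RBT → Bool
  | leaf => true
  | node u v => if u = leaf then isCat v else if v = leaf then isCat u else false

theorem isCat_norm (t : RBT) : isCat (norm t) = isCat t := by
  induction t with
  | leaf => rfl
  | node u v ihu ihv =>
    rw [norm]
    have hu := @norm_eq_leaf u
    have hv := @norm_eq_leaf v
    split <;> rw [isCat, isCat] <;>
      by_cases h1 : u = leaf <;> by_cases h2 : v = leaf <;>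
      simp_all [isCat]

theorem isCat_pend_leaf (k : ℕ) : isCat (pend leaf k) = true := by
  induction k with
  | zero => rfl
  | succ k ih => rw [pend, isCat, if_pos rfl, ih]

theorem isCat_pend_base {u v : RBT} (hu : u ≠ leaf) (hv : v ≠ leaf) (k : ℕ) :
    isCat (pend (node u v) k) = false := by
  induction k with
  | zero => rw [pend, isCat, if_neg hu, if_neg hv]
  | succ k ih => rw [pend, isCat, if_pos rfl, ih]

def tl : RBT → ℕ
  | leaf => 0
  | node u v => if u = leaf then tl v + 1 else if v = leaf then tl u + 1 else 0

theorem tl_norm (t : RBT) : tl (norm t) = tl t := by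
  induction t with
  | leaf => rfl
  | node u v ihu ihv =>
    rw [norm]
    have hu := @norm_eq_leaf u
    have hv := @norm_eq_leaf v
    split <;> rw [tl, tl] <;>
      by_cases h1 : u = leaf <;> by_cases h2 : v = leaf <;>
      simp_all [tl]

theorem tl_pend_base {u v : RBT} (hu : u ≠ leaf) (hv : v ≠ leaf) (k : ℕ) :
    tl (pend (node u v) k) = k := by
  induction k with
  | zero => rw [pend, tl, if_neg hu, if_neg hv]
  | succ k ih => rw [pend, tl, if_pos rfl, ih]

theorem tl_pend_ge (w : RBT) (k : ℕ) : k ≤ tl (pend w k) := by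
  induction k with
  | zero => omega
  | succ k ih => rw [pend, tl, if_pos rfl]; omega

def ssz : RBT → ℕ
  | leaf => 0
  | node u v => min (numLeaves u) (numLeaves v)

theorem ssz_norm_node (u v : RBT) : ssz (norm (node u v)) = min (numLeaves u) (numLeaves v) := by
  rw [norm]
  split <;> simp [ssz, numLeaves_norm, min_comm]

def isPend : RBT → Bool
  | node leaf _ => true
  | node _ leaf => true
  | _ => false

theorem isPend_node (u v : RBT) : isPend (node u v) = true ↔ u = leaf ∨ v = leaf := by
  cases u <;> cases v <;> simp [isPend]

theorem isPend_norm_node (u v : RBT) :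
    isPend (norm (node u v)) = true ↔ u = leaf ∨ v = leaf := by
  rw [norm]
  split <;> rw [isPend_node] <;> simp [norm_eq_leaf] <;> tauto

/-- extract the subtree of size `s` from a two-subtree card, if unambiguous -/
def exB (s : ℕ) : RBT → Option RBT
  | node u v =>
      if numLeaves u = s ∧ numLeaves v ≠ s then some u
      else if numLeaves v = s ∧ numLeaves u ≠ s then some v
      else none
  | leaf => none

theorem exB_norm_left {u v : RBT} {s : ℕ} (h1 : numLeaves u = s) (h2 : numLeaves v ≠ s) :
    exB s (norm (node u v)) = some (norm u) := by
  rw [norm]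
  split <;> rw [exB] <;> simp [numLeaves_norm, h1, h2]

theorem exB_norm_right {u v : RBT} {s : ℕ} (h1 : numLeaves v = s) (h2 : numLeaves u ≠ s) :
    exB s (norm (node u v)) = some (norm v) := by
  rw [norm]
  split <;> rw [exB] <;> simp [numLeaves_norm, h1, h2]

theorem exB_norm_none {u v : RBT} {s : ℕ} (h : (numLeaves u = s) ↔ (numLeaves v = s)) :
    exB s (norm (node u v)) = none := by
  rw [norm]
  split <;> rw [exB] <;> by_cases h1 : numLeaves u = s <;>
    simp [numLeaves_norm, h1, h.1, h.2, ← h, h.not] <;> tauto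

theorem map_norm_nodeL {s t : Multiset RBT} (h : s.map norm = t.map norm) {c c' : RBT}
    (hc : norm c = norm c') :
    s.map (fun x => norm (node x c)) = t.map (fun x => norm (node x c')) := by
  have e1 : s.map (fun x => norm (node x c)) = (s.map norm).map (fun z => norm (node z c)) := by
    rw [Multiset.map_map]
    exact Multiset.map_congr rfl fun x _ => (norm_node_congr (norm_norm x) rfl).symm
  have e2 : t.map (fun x => norm (node x c')) = (t.map norm).map (fun z => norm (node z c')) := by
    rw [Multiset.map_map]
    exact Multiset.map_congr rfl fun x _ => (norm_node_congr (norm_norm x) rfl).symm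
  rw [e1, e2, h]
  exact Multiset.map_congr rfl fun x _ => norm_node_congr rfl hc

theorem map_norm_swap (s : Multiset RBT) (c : RBT) :
    s.map (fun x => norm (node c x)) = s.map (fun x => norm (node x c)) :=
  Multiset.map_congr rfl fun x _ => norm_node_comm c x

theorem deck_norm (t : RBT) : (deck (norm t)).map norm = (deck t).map norm := by
  induction t with
  | leaf => rfl
  | node a b iha ihb =>
    have hfirst : ∀ (x y : RBT), (deck (norm x)).map norm = (deck x).map norm →
        ((if norm x = leaf then ({norm y} : Multiset RBT)
          else (deck (norm x)).map (fun z => node z (norm y)))).map norm =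
        ((if x = leaf then ({y} : Multiset RBT)
          else (deck x).map (fun z => node z y))).map norm := by
      intro x y ihx
      by_cases hx : x = leaf
      · rw [if_pos hx, if_pos (norm_eq_leaf.2 hx)]
        simp [norm_norm]
      · rw [if_neg hx, if_neg (fun hh => hx (norm_eq_leaf.1 hh))]
        rw [Multiset.map_map, Multiset.map_map]
        exact map_norm_nodeL ihx (norm_norm y)
    rw [norm]
    split
    · rw [deck, deck, Multiset.map_add, Multiset.map_add]
      congr 1
      · exact hfirst a b iha
      · by_cases hb : b = leaf
        · rw [if_pos (norm_eq_leaf.2 hb), if_pos hb]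
          simp [norm_norm]
        · rw [if_neg (fun hh => hb (norm_eq_leaf.1 hh)), if_neg hb]
          rw [Multiset.map_map, Multiset.map_map]
          have e1 : ((fun x => norm x) ∘ fun z => node (norm a) z) =
              fun z => norm (node (norm a) z) := rfl
          have e2 : ((fun x => norm x) ∘ fun z => node a z) = fun z => norm (node a z) := rfl
          rw [e1, e2, map_norm_swap, map_norm_swap]
          exact map_norm_nodeL ihb (norm_norm a)
    · rw [deck, deck, Multiset.map_add, Multiset.map_add, add_comm]
      congr 1
      · by_cases ha : a = leaf
        · rw [if_pos (norm_eq_leaf.2 ha), if_pos ha]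
          simp [norm_norm]
        · rw [if_neg (fun hh => ha (norm_eq_leaf.1 hh)), if_neg ha]
          rw [Multiset.map_map, Multiset.map_map]
          have e1 : ((fun x => norm x) ∘ fun z => node (norm b) z) =
              fun z => norm (node (norm b) z) := rfl
          have e2 : ((fun x => norm x) ∘ fun z => node z b) = fun z => norm (node z b) := rfl
          rw [e1, e2, map_norm_swap]
          exact map_norm_nodeL iha (norm_norm b)
      · by_cases hb : b = leaf
        · rw [if_pos (norm_eq_leaf.2 hb), if_pos hb]
          simp [norm_norm]
        · rw [if_neg (fun hh => hb (norm_eq_leaf.1 hh)), if_neg hb]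
          rw [Multiset.map_map, Multiset.map_map]
          have e1 : ((fun x => norm x) ∘ fun z => node z (norm a)) =
              fun z => norm (node z (norm a)) := rfl
          have e2 : ((fun x => norm x) ∘ fun z => node a z) = fun z => norm (node a z) := rfl
          rw [e1, e2, map_norm_swap]
          exact map_norm_nodeL ihb (norm_norm a)

end RBT

theorem filterMap_add' {α β : Type} (f : α → Option β) (s t : Multiset α) :
    Multiset.filterMap f (s + t) = Multiset.filterMap f s + Multiset.filterMap f t := by
  induction s using Multiset.induction_on with
  | empty => simp
  | cons a s ih =>
    rw [Multiset.cons_add]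
    cases h : f a with
    | none => rw [Multiset.filterMap_cons_none _ _ h, Multiset.filterMap_cons_none _ _ h, ih]
    | some b =>
      rw [Multiset.filterMap_cons_some _ _ _ h, Multiset.filterMap_cons_some _ _ _ h, ih,
        Multiset.cons_add]

theorem filterMap_congr' {α β : Type} {f g : α → Option β} {s : Multiset α}
    (h : ∀ a ∈ s, f a = g a) : Multiset.filterMap f s = Multiset.filterMap g s := by
  induction s using Multiset.induction_on with
  | empty => simp
  | cons a s ih =>
    have ha := h a (Multiset.mem_cons_self a s)
    have ih' := ih fun a ha' => h a (Multiset.mem_cons_of_mem ha')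
    cases hg : g a with
    | none =>
      rw [Multiset.filterMap_cons_none _ _ (ha.trans hg),
        Multiset.filterMap_cons_none _ _ hg, ih']
    | some b =>
      rw [Multiset.filterMap_cons_some _ _ _ (ha.trans hg),
        Multiset.filterMap_cons_some _ _ _ hg, ih']

theorem filterMap_none' {α β : Type} (s : Multiset α) :
    Multiset.filterMap (fun _ => (none : Option β)) s = 0 := by
  induction s using Multiset.induction_on with
  | empty => simp
  | cons a s ih => rw [Multiset.filterMap_cons_none _ _ rfl, ih]

theorem filterMap_some' {α β : Type} (s : Multiset α) (b : β) :
    Multiset.filterMap (fun _ => some b) s = Multiset.replicate (Multiset.card s) b := by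
  induction s using Multiset.induction_on with
  | empty => simp
  | cons a s ih =>
    rw [Multiset.filterMap_cons_some (fun _ => some b) a s (show (fun (_ : α) => some b) a = some b from rfl), ih]
    simp [Multiset.replicate_succ]

theorem replicate_inj {α : Type} {x y : α} {n : ℕ} (hn : n ≠ 0)
    (h : Multiset.replicate n x = Multiset.replicate n y) : x = y :=
  Multiset.eq_of_mem_replicate (h ▸ Multiset.mem_replicate.2 ⟨hn, rfl⟩)

namespace RBT

theorem node_ne_leaf {a b : RBT} : node a b ≠ leaf := fun h => RBT.noConfusion h

theorem no_mix {u v : RBT} (hu : u ≠ leaf) (hv : v ≠ leaf) (j j' : ℕ)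
    (hd : (deck (pend leaf (j+1))).map norm = (deck (pend (node u v) (j'+1))).map norm) :
    False := by
  have hmem : norm (pend (node u v) j') ∈ (deck (pend (node u v) (j'+1))).map norm := by
    rw [deck_pend node_ne_leaf j']
    exact Multiset.mem_map_of_mem _
      (Multiset.mem_add.2 (Or.inl (Multiset.mem_replicate.2 ⟨by omega, rfl⟩)))
  rw [← hd, deck_pend_leaf, Multiset.map_replicate] at hmem
  have heq := Multiset.eq_of_mem_replicate hmem
  have h1 : isCat (norm (pend (node u v) j')) = false := by
    rw [isCat_norm]; exact isCat_pend_base hu hv j'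
  have h2 : isCat (norm (pend leaf j)) = true := by
    rw [isCat_norm]; exact isCat_pend_leaf j
  rw [heq, h2] at h1
  exact Bool.noConfusion h1

theorem tl_ge_of_mem {u v : RBT} (hu : u ≠ leaf) (hv : v ≠ leaf) (j : ℕ) {C : RBT}
    (hC : C ∈ (deck (pend (node u v) (j+1))).map norm) : j ≤ tl C := by
  rw [deck_pend node_ne_leaf j] at hC
  obtain ⟨C0, hC0, rfl⟩ := Multiset.mem_map.1 hC
  rw [tl_norm]
  rcases Multiset.mem_add.1 hC0 with h | h
  · rw [Multiset.eq_of_mem_replicate h, tl_pend_base hu hv]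
  · obtain ⟨w, hw, rfl⟩ := Multiset.mem_map.1 h
    have := tl_pend_ge w (j+1)
    omega

theorem filter_deck_pend {u v : RBT} (hu : u ≠ leaf) (hv : v ≠ leaf) (j : ℕ) :
    Multiset.filter (fun C => tl C ≤ j) ((deck (pend (node u v) (j+1))).map norm) =
      Multiset.replicate (j+1) (norm (pend (node u v) j)) := by
  rw [deck_pend node_ne_leaf j, Multiset.map_add, Multiset.map_replicate, Multiset.filter_add]
  have ha : Multiset.filter (fun C => tl C ≤ j)
      (Multiset.replicate (j+1) (norm (pend (node u v) j))) =
      Multiset.replicate (j+1) (norm (pend (node u v) j)) := by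
    refine Multiset.filter_eq_self.2 fun a ha => ?_
    rw [Multiset.eq_of_mem_replicate ha, tl_norm, tl_pend_base hu hv]
  have hb : Multiset.filter (fun C => tl C ≤ j)
      ((Multiset.map (fun w => pend w (j+1)) (deck (node u v))).map norm) = 0 := by
    refine Multiset.filter_eq_nil.2 fun a ha => ?_
    rw [Multiset.map_map] at ha
    obtain ⟨w, hw, rfl⟩ := Multiset.mem_map.1 ha
    simp only [Function.comp]
    rw [tl_norm]
    have := tl_pend_ge w (j+1)
    omega
  rw [ha, hb, add_zero]

theorem branch2_nodes {u v u' v' : RBT} (hu : u ≠ leaf) (hv : v ≠ leaf)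
    (hu' : u' ≠ leaf) (hv' : v' ≠ leaf)
    (hnS : norm (node u v) = node u v) (hnS' : norm (node u' v') = node u' v') {j j' : ℕ}
    (hd : (deck (pend (node u v) (j+1))).map norm =
      (deck (pend (node u' v') (j'+1))).map norm) :
    pend (node u v) (j+1) = pend (node u' v') (j'+1) := by
  have hmemX : norm (pend (node u v) j) ∈ (deck (pend (node u v) (j+1))).map norm := by
    rw [deck_pend node_ne_leaf j]
    exact Multiset.mem_map_of_mem _
      (Multiset.mem_add.2 (Or.inl (Multiset.mem_replicate.2 ⟨by omega, rfl⟩)))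
  have hmemY : norm (pend (node u' v') j') ∈ (deck (pend (node u' v') (j'+1))).map norm := by
    rw [deck_pend node_ne_leaf j']
    exact Multiset.mem_map_of_mem _
      (Multiset.mem_add.2 (Or.inl (Multiset.mem_replicate.2 ⟨by omega, rfl⟩)))
  have h1 : j' ≤ tl (norm (pend (node u v) j)) := tl_ge_of_mem hu' hv' j' (hd ▸ hmemX)
  have h2 : j ≤ tl (norm (pend (node u' v') j')) := tl_ge_of_mem hu hv j (hd.symm ▸ hmemY)
  rw [tl_norm, tl_pend_base hu hv] at h1
  rw [tl_norm, tl_pend_base hu' hv'] at h2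
  have hjj : j = j' := le_antisymm h2 h1
  subst hjj
  have e1 := filter_deck_pend hu hv j
  have e2 := filter_deck_pend hu' hv' j
  rw [hd, e2] at e1
  have := replicate_inj (by omega) e1
  rw [norm_pend, norm_pend, hnS, hnS'] at this
  rw [pend_inj j this]

theorem decomp_pendant {B : RBT} (hX : norm (node leaf B) = node leaf B) :
    ∃ S j, node leaf B = pend S (j+1) ∧ norm S = S ∧
      (S = leaf ∨ ∃ u v, S = node u v ∧ u ≠ leaf ∧ v ≠ leaf) := by
  obtain ⟨S, k, h1, h2, h3⟩ := decomp hX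
  cases k with
  | zero =>
    exfalso
    rcases h3 with rfl | ⟨u, v, rfl, hu, hv⟩
    · exact RBT.noConfusion h1
    · rw [pend] at h1
      injection h1 with h1a _
      exact hu h1a.symm
  | succ k => exact ⟨S, k, h1, h2, h3⟩

theorem branch2 {B B' : RBT} (hX : norm (node leaf B) = node leaf B)
    (hY : norm (node leaf B') = node leaf B')
    (hn : numLeaves (node leaf B) = numLeaves (node leaf B'))
    (hd : (deck (node leaf B)).map norm = (deck (node leaf B')).map norm) :
    node leaf B = node leaf B' := by
  obtain ⟨S, j, hXe, hnS, hbase⟩ := decomp_pendant hX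
  obtain ⟨S', j', hYe, hnS', hbase'⟩ := decomp_pendant hY
  rw [hXe, hYe] at hd hn ⊢
  rcases hbase with rfl | ⟨u, v, rfl, hu, hv⟩ <;>
    rcases hbase' with rfl | ⟨u', v', rfl, hu', hv'⟩
  · have hjj : j = j' := by
      rw [numLeaves_pend, numLeaves_pend] at hn
      omega
    rw [hjj]
  · exact absurd hd (fun hd => no_mix hu' hv' j j' hd)
  · exact absurd hd.symm (fun hd => no_mix hu hv j' j hd)
  · exact branch2_nodes hu hv hu' hv' hnS hnS' hd

end RBT

namespace RBT

theorem cnt_pend_ge {B : RBT} (hB : B ≠ leaf) :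
    numLeaves B ≤
      Multiset.countP (fun C => isPend C = true) ((deck (node leaf B)).map norm) := by
  rw [deck, if_pos rfl, if_neg hB, Multiset.map_add, Multiset.countP_add, Multiset.map_map]
  have h2 : Multiset.countP (fun C => isPend C = true)
      ((deck B).map (norm ∘ fun x => node leaf x)) =
      Multiset.card ((deck B).map (norm ∘ fun x => node leaf x)) := by
    refine Multiset.countP_eq_card.2 fun a ha => ?_
    obtain ⟨y, hy, rfl⟩ := Multiset.mem_map.1 ha
    exact (isPend_norm_node leaf y).2 (Or.inl rfl)
  rw [h2, Multiset.card_map, card_deck]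
  omega

theorem cnt_nonpend_le {A B : RBT} (hA : A ≠ leaf) (hX : norm (node A B) = node A B)
    (h5 : 5 ≤ numLeaves (node A B)) :
    Multiset.countP (fun C => isPend C = true) ((deck (node A B)).map norm) ≤ 2 := by
  obtain ⟨hnA, hnB, hk⟩ := norm_node_eq hX
  have hba := leKey_numLeaves hk
  have hb2 : 2 ≤ numLeaves A := by
    have h1 := numLeaves_pos A
    by_contra hcon
    push_neg at hcon
    exact hA (numLeaves_eq_one (by omega))
  have hn5 : numLeaves A + numLeaves B = numLeaves (node A B) := rfl
  have ha3 : 3 ≤ numLeaves B := by omega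
  have hB : B ≠ leaf := by
    intro h
    rw [h] at ha3
    simp [numLeaves] at ha3
  rw [deck, if_neg hA, if_neg hB, Multiset.map_add, Multiset.countP_add,
    Multiset.map_map, Multiset.map_map]
  have h2 : Multiset.countP (fun C => isPend C = true)
      ((deck B).map (norm ∘ fun y => node A y)) = 0 := by
    refine Multiset.countP_eq_zero.2 fun C hC => ?_
    obtain ⟨y, hy, rfl⟩ := Multiset.mem_map.1 hC
    have hy' : numLeaves y = numLeaves B - 1 := mem_deck_numLeaves hB hy
    have hyne : y ≠ leaf := by
      intro h
      rw [h] at hy'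
      simp [numLeaves] at hy'
      omega
    simp only [Function.comp]
    rw [isPend_norm_node]
    rintro (h | h)
    · exact hA h
    · exact hyne h
  rw [h2, add_zero]
  by_cases hb : numLeaves A = 2
  · refine le_trans (Multiset.countP_le_card _ _) ?_
    rw [Multiset.card_map, card_deck, hb]
  · have h1 : Multiset.countP (fun C => isPend C = true)
        ((deck A).map (norm ∘ fun x => node x B)) = 0 := by
      refine Multiset.countP_eq_zero.2 fun C hC => ?_
      obtain ⟨x, hx, rfl⟩ := Multiset.mem_map.1 hC
      have hx' : numLeaves x = numLeaves A - 1 := mem_deck_numLeaves hA hx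
      have hxne : x ≠ leaf := by
        intro h
        rw [h] at hx'
        simp [numLeaves] at hx'
        omega
      simp only [Function.comp]
      rw [isPend_norm_node]
      rintro (h | h)
      · exact hxne h
      · exact hB h
    omega

theorem fm_right {s0 : Multiset RBT} {c : RBT} {s : ℕ} (hcs : numLeaves c = s)
    (hmem : ∀ x ∈ s0, numLeaves x ≠ s) :
    Multiset.filterMap (exB s) (s0.map (fun x => norm (node x c))) =
      Multiset.replicate (Multiset.card s0) (norm c) := by
  rw [Multiset.filterMap_map]
  exact (filterMap_congr' fun x hx => exB_norm_right hcs (hmem x hx)).trans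
    (filterMap_some' _ _)

theorem fm_left {s0 : Multiset RBT} {c : RBT} {s : ℕ} (hcs : numLeaves c = s)
    (hmem : ∀ y ∈ s0, numLeaves y ≠ s) :
    Multiset.filterMap (exB s) (s0.map (fun y => norm (node c y))) =
      Multiset.replicate (Multiset.card s0) (norm c) := by
  rw [Multiset.filterMap_map]
  exact (filterMap_congr' fun y hy => exB_norm_left hcs (hmem y hy)).trans
    (filterMap_some' _ _)

theorem fm_noneR {s0 : Multiset RBT} {c : RBT} {s : ℕ}
    (hmem : ∀ x ∈ s0, (numLeaves x = s ↔ numLeaves c = s)) :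
    Multiset.filterMap (exB s) (s0.map (fun x => norm (node x c))) = 0 := by
  rw [Multiset.filterMap_map]
  exact (filterMap_congr' fun x hx => exB_norm_none (hmem x hx)).trans (filterMap_none' _)

theorem fm_noneL {s0 : Multiset RBT} {c : RBT} {s : ℕ}
    (hmem : ∀ y ∈ s0, (numLeaves c = s ↔ numLeaves y = s)) :
    Multiset.filterMap (exB s) (s0.map (fun y => norm (node c y))) = 0 := by
  rw [Multiset.filterMap_map]
  exact (filterMap_congr' fun y hy => exB_norm_none (hmem y hy)).trans (filterMap_none' _)

theorem small_not_lt {b a b' a' : ℕ} (hb : 2 ≤ b) (hba : b ≤ a) (hb' : 2 ≤ b')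
    (hba' : b' ≤ a')
    (h : Multiset.replicate b (b-1) + Multiset.replicate a (min b (a-1)) =
      Multiset.replicate b' (b'-1) + Multiset.replicate a' (min b' (a'-1))) :
    ¬ b < b' := by
  intro hlt
  have hmem : (b-1) ∈ Multiset.replicate b (b-1) + Multiset.replicate a (min b (a-1)) :=
    Multiset.mem_add.2 (Or.inl (Multiset.mem_replicate.2 ⟨by omega, rfl⟩))
  rw [h] at hmem
  have hmin := min_choice b' (a'-1)
  rcases Multiset.mem_add.1 hmem with hm | hm
  · have := Multiset.eq_of_mem_replicate hm
    omega
  · have := Multiset.eq_of_mem_replicate hm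
    omega

end RBT

namespace RBT

theorem branchI {A B A' B' : RBT} (hA : A ≠ leaf) (hA' : A' ≠ leaf)
    (hX : norm (node A B) = node A B) (hY : norm (node A' B') = node A' B')
    (h5 : 5 ≤ numLeaves (node A B))
    (hn : numLeaves (node A B) = numLeaves (node A' B'))
    (hd : (deck (node A B)).map norm = (deck (node A' B')).map norm) :
    node A B = node A' B' := by
  obtain ⟨hnA, hnB, hk⟩ := norm_node_eq hX
  obtain ⟨hnA', hnB', hk'⟩ := norm_node_eq hY
  have hba := leKey_numLeaves hk
  have hba' := leKey_numLeaves hk'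
  have hb2 : 2 ≤ numLeaves A := by
    have h1 := numLeaves_pos A
    by_contra hcon
    push_neg at hcon
    exact hA (numLeaves_eq_one (by omega))
  have hb2' : 2 ≤ numLeaves A' := by
    have h1 := numLeaves_pos A'
    by_contra hcon
    push_neg at hcon
    exact hA' (numLeaves_eq_one (by omega))
  have hnn : numLeaves A + numLeaves B = numLeaves (node A B) := rfl
  have hnn' : numLeaves A' + numLeaves B' = numLeaves (node A' B') := rfl
  have ha3 : 3 ≤ numLeaves B := by omega
  have ha3' : 3 ≤ numLeaves B' := by omega
  have hB : B ≠ leaf := fun h => by rw [h] at ha3; simp [numLeaves] at ha3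
  have hB' : B' ≠ leaf := fun h => by rw [h] at ha3'; simp [numLeaves] at ha3'
  have hdeckX : (deck (node A B)).map norm =
      (deck A).map (fun x => norm (node x B)) + (deck B).map (fun y => norm (node A y)) := by
    rw [deck, if_neg hA, if_neg hB, Multiset.map_add, Multiset.map_map, Multiset.map_map]
    rfl
  have hdeckY : (deck (node A' B')).map norm =
      (deck A').map (fun x => norm (node x B')) +
      (deck B').map (fun y => norm (node A' y)) := by
    rw [deck, if_neg hA', if_neg hB', Multiset.map_add, Multiset.map_map, Multiset.map_map]
    rfl
  have hxA : ∀ x ∈ deck A, numLeaves x = numLeaves A - 1 := fun x hx => mem_deck_numLeaves hA hx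
  have hyB : ∀ y ∈ deck B, numLeaves y = numLeaves B - 1 := fun y hy => mem_deck_numLeaves hB hy
  have hxA' : ∀ x ∈ deck A', numLeaves x = numLeaves A' - 1 :=
    fun x hx => mem_deck_numLeaves hA' hx
  have hyB' : ∀ y ∈ deck B', numLeaves y = numLeaves B' - 1 :=
    fun y hy => mem_deck_numLeaves hB' hy
  -- step: small sizes agree
  have hssz : ((deck (node A B)).map norm).map ssz = ((deck (node A' B')).map norm).map ssz := by
    rw [hd]
  have hsszX : ((deck (node A B)).map norm).map ssz =
      Multiset.replicate (numLeaves A) (numLeaves A - 1) +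
      Multiset.replicate (numLeaves B) (min (numLeaves A) (numLeaves B - 1)) := by
    rw [hdeckX, Multiset.map_add, Multiset.map_map, Multiset.map_map]
    congr 1
    · refine (Multiset.map_congr rfl fun x hx => ?_).trans
        (by rw [Multiset.map_const', card_deck])
      show ssz (norm (node x B)) = numLeaves A - 1
      rw [ssz_norm_node, hxA x hx]
      exact min_eq_left (by omega)
    · refine (Multiset.map_congr rfl fun y hy => ?_).trans
        (by rw [Multiset.map_const', card_deck])
      show ssz (norm (node A y)) = min (numLeaves A) (numLeaves B - 1)
      rw [ssz_norm_node, hyB y hy]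
  have hsszY : ((deck (node A' B')).map norm).map ssz =
      Multiset.replicate (numLeaves A') (numLeaves A' - 1) +
      Multiset.replicate (numLeaves B') (min (numLeaves A') (numLeaves B' - 1)) := by
    rw [hdeckY, Multiset.map_add, Multiset.map_map, Multiset.map_map]
    congr 1
    · refine (Multiset.map_congr rfl fun x hx => ?_).trans
        (by rw [Multiset.map_const', card_deck])
      show ssz (norm (node x B')) = numLeaves A' - 1
      rw [ssz_norm_node, hxA' x hx]
      exact min_eq_left (by omega)
    · refine (Multiset.map_congr rfl fun y hy => ?_).trans
        (by rw [Multiset.map_const', card_deck])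
      show ssz (norm (node A' y)) = min (numLeaves A') (numLeaves B' - 1)
      rw [ssz_norm_node, hyB' y hy]
  rw [hsszX, hsszY] at hssz
  have hbb : numLeaves A = numLeaves A' := by
    have n1 := small_not_lt hb2 (by omega) hb2' (by omega) hssz
    have n2 := small_not_lt hb2' (by omega) hb2 (by omega) hssz.symm
    omega
  have haa : numLeaves B = numLeaves B' := by omega
  by_cases hab : numLeaves B = numLeaves A
  · -- balanced case
    have MEQ : Multiset.replicate (numLeaves B) B + Multiset.replicate (numLeaves B) A =
        Multiset.replicate (numLeaves B) B' + Multiset.replicate (numLeaves B) A' := by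
      have e1 : Multiset.filterMap (exB (numLeaves B)) ((deck (node A B)).map norm) =
          Multiset.replicate (numLeaves B) B + Multiset.replicate (numLeaves B) A := by
        rw [hdeckX, filterMap_add']
        rw [fm_right rfl (fun x hx => by rw [hxA x hx]; omega), hnB, card_deck,
          fm_left (by omega) (fun y hy => by rw [hyB y hy]; omega), hnA, card_deck, hab]
      have e2 : Multiset.filterMap (exB (numLeaves B)) ((deck (node A' B')).map norm) =
          Multiset.replicate (numLeaves B) B' + Multiset.replicate (numLeaves B) A' := by
        rw [hdeckY, filterMap_add']
        rw [fm_right haa.symm (fun x hx => by rw [hxA' x hx]; omega), hnB', card_deck,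
          fm_left (by omega) (fun y hy => by rw [hyB' y hy]; omega), hnA', card_deck]
        have t1 : numLeaves A' = numLeaves B := by omega
        rw [t1, ← haa]
      exact e1.symm.trans (hd ▸ e2)
    have hm2 : 2 ≤ numLeaves B := by omega
    have hAA : A = A' ∨ A = B' := by
      by_cases h1 : A = A'
      · exact Or.inl h1
      by_cases h2 : A = B'
      · exact Or.inr h2
      exfalso
      have hc := congrArg (Multiset.count A) MEQ
      simp only [Multiset.count_add, Multiset.count_replicate, if_true] at hc
      rw [if_neg (fun h : B' = A => h2 h.symm), if_neg (fun h : A' = A => h1 h.symm)] at hc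
      split_ifs at hc <;> omega
    rcases hAA with hAA | hAA
    · have hc := congrArg (Multiset.count B) MEQ
      simp only [Multiset.count_add, Multiset.count_replicate, if_true] at hc
      rw [← hAA] at hc
      by_cases h3 : B' = B
      · rw [hAA, h3.symm]
      · rw [if_neg h3] at hc
        split_ifs at hc <;> omega
    · -- A = B' ; show B = A'
      have hc := congrArg (Multiset.count A') MEQ
      simp only [Multiset.count_add, Multiset.count_replicate, if_true] at hc
      rw [← hAA] at hc
      have hBA' : B = A' := by
        by_cases h3 : B = A'
        · exact h3
        rw [if_neg h3] at hc
        split_ifs at hc <;> omega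
      calc node A B = norm (node A B) := hX.symm
        _ = norm (node B A) := norm_node_comm A B
        _ = norm (node A' B') := by rw [hBA', hAA]
        _ = node A' B' := hY
  · -- unbalanced case : numLeaves A < numLeaves B
    have hlt : numLeaves A < numLeaves B := by omega
    have hBeq : B = B' := by
      have e1 : Multiset.filterMap (exB (numLeaves B)) ((deck (node A B)).map norm) =
          Multiset.replicate (numLeaves A) B := by
        rw [hdeckX, filterMap_add']
        rw [fm_right rfl (fun x hx => by rw [hxA x hx]; omega), hnB, card_deck]
        rw [fm_noneL (fun y hy => by rw [hyB y hy]; constructor <;> omega), add_zero]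
      have e2 : Multiset.filterMap (exB (numLeaves B)) ((deck (node A' B')).map norm) =
          Multiset.replicate (numLeaves A') B' := by
        rw [hdeckY, filterMap_add']
        rw [fm_right haa.symm (fun x hx => by rw [hxA' x hx]; omega), hnB', card_deck]
        rw [fm_noneL (fun y hy => by rw [hyB' y hy]; constructor <;> omega), add_zero]
      have e3 := e1.symm.trans (hd ▸ e2)
      rw [hbb] at e3
      exact replicate_inj (by omega) e3
    by_cases hb1 : numLeaves A = numLeaves B - 1
    · -- ambiguous case
      have hMX : Multiset.filter (fun C => ssz C = numLeaves A)
          ((deck (node A B)).map norm) = (deck B).map (fun y => norm (node A y)) := by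
        rw [hdeckX, Multiset.filter_add]
        have hz : Multiset.filter (fun C => ssz C = numLeaves A)
            ((deck A).map (fun x => norm (node x B))) = 0 := by
          refine Multiset.filter_eq_nil.2 fun C hC => ?_
          obtain ⟨x, hx, rfl⟩ := Multiset.mem_map.1 hC
          rw [ssz_norm_node, hxA x hx]
          omega
        have hs : Multiset.filter (fun C => ssz C = numLeaves A)
            ((deck B).map (fun y => norm (node A y))) =
            (deck B).map (fun y => norm (node A y)) := by
          refine Multiset.filter_eq_self.2 fun C hC => ?_
          obtain ⟨y, hy, rfl⟩ := Multiset.mem_map.1 hC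
          rw [ssz_norm_node, hyB y hy]
          omega
        rw [hz, hs, zero_add]
      have hMY : Multiset.filter (fun C => ssz C = numLeaves A)
          ((deck (node A' B')).map norm) = (deck B).map (fun y => norm (node A' y)) := by
        rw [hdeckY, Multiset.filter_add]
        have hz : Multiset.filter (fun C => ssz C = numLeaves A)
            ((deck A').map (fun x => norm (node x B'))) = 0 := by
          refine Multiset.filter_eq_nil.2 fun C hC => ?_
          obtain ⟨x, hx, rfl⟩ := Multiset.mem_map.1 hC
          rw [ssz_norm_node, hxA' x hx]
          omega
        have hs : Multiset.filter (fun C => ssz C = numLeaves A)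
            ((deck B').map (fun y => norm (node A' y))) =
            (deck B').map (fun y => norm (node A' y)) := by
          refine Multiset.filter_eq_self.2 fun C hC => ?_
          obtain ⟨y, hy, rfl⟩ := Multiset.mem_map.1 hC
          rw [ssz_norm_node, hyB' y hy]
          omega
        rw [hz, hs, zero_add, hBeq]
      have hMM : (deck B).map (fun y => norm (node A y)) =
          (deck B).map (fun y => norm (node A' y)) := by
        rw [← hMX, ← hMY, hd]
      by_cases hAA' : A = A'
      · rw [hAA', hBeq]
      exfalso
      have hex : ∃ w, w ∈ deck B := by
        refine Multiset.exists_mem_of_ne_zero fun h0 => ?_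
        have := card_deck B
        rw [h0] at this
        simp at this
        omega
      have claim1 : ∀ w ∈ deck B, norm w = A' := by
        intro w hw
        have hmem : norm (node A w) ∈ (deck B).map (fun y => norm (node A' y)) :=
          hMM ▸ Multiset.mem_map_of_mem _ hw
        obtain ⟨w1, hw1, he⟩ := Multiset.mem_map.1 hmem
        rcases iso_node_inv (iso_iff_norm.2 he) with ⟨i1, _⟩ | ⟨i1, _⟩
        · exact absurd (by rw [← hnA, ← hnA']; exact (norm_eq_of_iso i1).symm) hAA'
        · rw [← hnA', norm_eq_of_iso i1.symm]
      have claim2 : ∀ w ∈ deck B, norm w = A := by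
        intro w hw
        have hmem : norm (node A' w) ∈ (deck B).map (fun y => norm (node A y)) :=
          hMM.symm ▸ Multiset.mem_map_of_mem _ hw
        obtain ⟨w1, hw1, he⟩ := Multiset.mem_map.1 hmem
        rcases iso_node_inv (iso_iff_norm.2 he) with ⟨i1, _⟩ | ⟨i1, _⟩
        · exact absurd (by rw [← hnA, ← hnA']; exact norm_eq_of_iso i1) hAA'
        · rw [← hnA, norm_eq_of_iso i1.symm]
      obtain ⟨w, hw⟩ := hex
      exact hAA' ((claim2 w hw).symm.trans (claim1 w hw))
    · -- unambiguous: extract A directly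
      have e1 : Multiset.filterMap (exB (numLeaves A)) ((deck (node A B)).map norm) =
          Multiset.replicate (numLeaves B) A := by
        rw [hdeckX, filterMap_add']
        rw [fm_noneR (fun x hx => by rw [hxA x hx]; constructor <;> omega)]
        rw [fm_left rfl (fun y hy => by rw [hyB y hy]; omega), hnA, card_deck, zero_add]
      have e2 : Multiset.filterMap (exB (numLeaves A)) ((deck (node A' B')).map norm) =
          Multiset.replicate (numLeaves B') A' := by
        rw [hdeckY, filterMap_add']
        rw [fm_noneR (fun x hx => by rw [hxA' x hx]; constructor <;> omega)]
        rw [fm_left hbb.symm (fun y hy => by rw [hyB' y hy]; omega), hnA', card_deck, zero_add]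
      have := e1.symm.trans (hd ▸ e2)
      rw [haa] at this
      rw [replicate_inj (by omega) this, hBeq]

theorem core' (X Y : RBT) (hX : norm X = X) (hY : norm Y = Y) (h5 : 5 ≤ numLeaves X)
    (hn : numLeaves X = numLeaves Y) (hd : (deck X).map norm = (deck Y).map norm) :
    X = Y := by
  cases X with
  | leaf => simp [numLeaves] at h5
  | node A B =>
    cases Y with
    | leaf => simp [numLeaves] at hn h5; omega
    | node A' B' =>
      by_cases hA : A = leaf <;> by_cases hA' : A' = leaf
      · subst hA; subst hA'
        exact branch2 hX hY hn hd
      · exfalso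
        subst hA
        have hBne : B ≠ leaf := by
          intro h
          rw [h] at h5
          simp [numLeaves] at h5
        have h1 := cnt_pend_ge hBne
        have h2 := cnt_nonpend_le hA' hY (hn ▸ h5)
        rw [hd] at h1
        have : numLeaves (node leaf B) = 1 + numLeaves B := rfl
        omega
      · exfalso
        subst hA'
        have hBne : B' ≠ leaf := by
          intro h
          subst h
          have h2 : numLeaves (node (leaf : RBT) (leaf : RBT)) = 2 := rfl
          omega
        have h1 := cnt_pend_ge hBne
        have h2 := cnt_nonpend_le hA hX h5
        rw [← hd] at h1
        have h3 : numLeaves (node (leaf : RBT) B') = 1 + numLeaves B' := rfl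
        omega
      · exact branchI hA hA' hX hY h5 hn hd

theorem core {X Y : RBT} (h5 : 5 ≤ numLeaves X) (hn : numLeaves X = numLeaves Y)
    (hd : (deck X).map norm = (deck Y).map norm) : Iso X Y :=
  iso_iff_norm.2 (core' (norm X) (norm Y) (norm_norm X) (norm_norm Y)
    (by rw [numLeaves_norm]; exact h5)
    (by rw [numLeaves_norm, numLeaves_norm]; exact hn)
    (by rw [deck_norm, deck_norm]; exact hd))

end RBT

namespace LTree

theorem del_of_not_mem : ∀ {t : LTree} {i : ℕ}, i ∉ t.labels → t.del i = some t := by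
  intro t
  induction t with
  | leaf a =>
    intro i h
    rw [labels, Multiset.mem_singleton] at h
    rw [del, if_neg (fun h' => h h'.symm)]
  | node l r ihl ihr =>
    intro i h
    rw [labels, Multiset.mem_add] at h
    push_neg at h
    rw [del, ihl h.1, ihr h.2]

theorem del_eq_none : ∀ {t : LTree} {i : ℕ}, t.del i = none ↔ t = leaf i := by
  intro t i
  cases t with
  | leaf a =>
    rw [del]
    split <;> rename_i h <;> simp [h]
  | node l r =>
    rw [del]
    constructor
    · intro h
      exfalso
      cases hl : l.del i with
      | none => rw [hl] at h; simp at h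
      | some l' =>
        rw [hl] at h
        cases hr : r.del i with
        | none => rw [hr] at h; simp at h
        | some r' => rw [hr] at h; simp at h
    · intro h
      exact LTree.noConfusion h

theorem forget_map (f : ℕ → ℕ) (t : LTree) : (t.map f).forget = t.forget := by
  induction t with
  | leaf a => rfl
  | node l r ihl ihr => rw [map, forget, forget, ihl, ihr]

theorem card_labels (t : LTree) : Multiset.card t.labels = RBT.numLeaves t.forget := by
  induction t with
  | leaf a => rfl
  | node l r ihl ihr => rw [labels, forget, RBT.numLeaves, Multiset.card_add, ihl, ihr]

theorem iso_forget {s t : LTree} (h : LIso s t) : RBT.Iso s.forget t.forget := by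
  induction h with
  | leaf a => exact RBT.Iso.leaf
  | node h1 h2 ih1 ih2 => exact RBT.Iso.node ih1 ih2
  | swap h1 h2 ih1 ih2 => exact RBT.Iso.swap ih1 ih2

theorem del_node_left {l r : LTree} {i : ℕ} {l' : LTree} (hl : l.del i = some l')
    (hr : i ∉ r.labels) : (node l r).del i = some (node l' r) := by
  rw [del, hl, del_of_not_mem hr]

theorem del_node_left_leaf {r : LTree} {a : ℕ} : (node (leaf a) r).del a = some r := by
  rw [del, del, if_pos rfl]

theorem del_node_right {l r : LTree} {i : ℕ} {r' : LTree} (hr : r.del i = some r')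
    (hl : i ∉ l.labels) : (node l r).del i = some (node l r') := by
  rw [del, del_of_not_mem hl, hr]

theorem del_node_right_leaf {l : LTree} {a : ℕ} (hl : a ∉ l.labels) :
    (node l (leaf a)).del a = some l := by
  rw [del, del_of_not_mem hl, del, if_pos rfl]

theorem forget_eq_leaf {t : LTree} (h : t.forget = RBT.leaf) : ∃ a, t = leaf a := by
  cases t with
  | leaf a => exact ⟨a, rfl⟩
  | node l r => exact RBT.noConfusion h

theorem deck_forget : ∀ {t : LTree}, t.labels.Nodup →
    t.labels.map (fun i => ((t.del i).getD (LTree.leaf 0)).forget) = RBT.deck t.forget := by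
  intro t
  induction t with
  | leaf a =>
    intro _
    rw [labels, forget, RBT.deck]
    rw [Multiset.map_singleton, del, if_pos rfl]
    rfl
  | node l r ihl ihr =>
    intro hnd
    rw [labels, Multiset.nodup_add] at hnd
    obtain ⟨h1, h2, hdisj⟩ := hnd
    rw [labels, Multiset.map_add, forget, RBT.deck]
    congr 1
    · -- deletions of labels in l
      by_cases hl : l.forget = RBT.leaf
      · obtain ⟨a, rfl⟩ := forget_eq_leaf hl
        rw [if_pos hl]
        rw [labels, Multiset.map_singleton, del_node_left_leaf]
        rfl
      · rw [if_neg hl]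
        rw [← ihl h1, Multiset.map_map]
        refine Multiset.map_congr rfl fun i hi => ?_
        have hir : i ∉ r.labels := fun hir => (Multiset.disjoint_left.1 hdisj) hi hir
        cases hdel : l.del i with
        | none =>
          exfalso
          obtain ⟨a, rfl⟩ : ∃ a, l = leaf a := ⟨i, del_eq_none.1 hdel⟩
          exact hl rfl
        | some l' =>
          rw [del_node_left hdel hir]
          simp only [Function.comp_apply]
          rw [hdel]
          rfl
    · -- deletions of labels in r
      by_cases hr : r.forget = RBT.leaf
      · obtain ⟨a, rfl⟩ := forget_eq_leaf hr
        rw [if_pos hr]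
        rw [labels, Multiset.map_singleton]
        rw [del_node_right_leaf (fun ha => (Multiset.disjoint_right.1 hdisj)
          (Multiset.mem_singleton.2 rfl) ha)]
        rfl
      · rw [if_neg hr]
        rw [← ihr h2, Multiset.map_map]
        refine Multiset.map_congr rfl fun i hi => ?_
        have hil : i ∉ l.labels := fun hil => (Multiset.disjoint_right.1 hdisj) hi hil
        cases hdel : r.del i with
        | none =>
          exfalso
          have : r = leaf i := del_eq_none.1 hdel
          rw [this] at hr
          exact hr rfl
        | some r' =>
          rw [del_node_right hdel hil]
          simp only [Function.comp_apply]
          rw [hdel]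
          rfl

end LTree

theorem rel_map_eq {α β : Type} {r : α → α → Prop} {s t : Multiset α}
    (h : Multiset.Rel r s t) (f : α → β) (hf : ∀ a b, r a b → f a = f b) :
    s.map f = t.map f := by
  induction h with
  | zero => simp
  | @cons a b as bs hab hr ih => rw [Multiset.map_cons, Multiset.map_cons, hf a b hab, ih]

/-- For a tanglegram of size n ≥ 5, the underlying trees are determined by the
multideck: any tanglegram of size n with the same multideck (up to tanglegram isomorphism of
cards) has left tree isomorphic to the left tree and right tree isomorphic to the right tree. -/
theorem tanglegram_trees_reconstructable (n : ℕ) (hn : 5 ≤ n) (p q : LTree × LTree)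
    (hp : IsTgl p) (hq : IsTgl q) (hpn : tglSize p = n) (hqn : tglSize q = n)
    (h : Multiset.Rel TIso (tdeck q) (tdeck p)) :
    RBT.Iso q.1.forget p.1.forget ∧ RBT.Iso q.2.forget p.2.forget := by
  obtain ⟨hnd_p, hlab_p⟩ := hp
  obtain ⟨hnd_q, hlab_q⟩ := hq
  have hnd_p2 : p.2.labels.Nodup := hlab_p ▸ hnd_p
  have hnd_q2 : q.2.labels.Nodup := hlab_q ▸ hnd_q
  -- sizes
  have hsz_q1 : RBT.numLeaves q.1.forget = n := by rw [← LTree.card_labels]; exact hqn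
  have hsz_p1 : RBT.numLeaves p.1.forget = n := by rw [← LTree.card_labels]; exact hpn
  have hsz_q2 : RBT.numLeaves q.2.forget = n := by
    rw [← LTree.card_labels, ← hlab_q]; exact hqn
  have hsz_p2 : RBT.numLeaves p.2.forget = n := by
    rw [← LTree.card_labels, ← hlab_p]; exact hpn
  -- deck computations
  have e_q1 : (tdeck q).map (fun c => RBT.norm c.1.forget) =
      (RBT.deck q.1.forget).map RBT.norm := by
    rw [tdeck, Multiset.map_map, ← LTree.deck_forget hnd_q, Multiset.map_map]
    rfl
  have e_p1 : (tdeck p).map (fun c => RBT.norm c.1.forget) =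
      (RBT.deck p.1.forget).map RBT.norm := by
    rw [tdeck, Multiset.map_map, ← LTree.deck_forget hnd_p, Multiset.map_map]
    rfl
  have e_q2 : (tdeck q).map (fun c => RBT.norm c.2.forget) =
      (RBT.deck q.2.forget).map RBT.norm := by
    rw [tdeck, Multiset.map_map, ← LTree.deck_forget hnd_q2, Multiset.map_map, ← hlab_q]
    rfl
  have e_p2 : (tdeck p).map (fun c => RBT.norm c.2.forget) =
      (RBT.deck p.2.forget).map RBT.norm := by
    rw [tdeck, Multiset.map_map, ← LTree.deck_forget hnd_p2, Multiset.map_map, ← hlab_p]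
    rfl
  have hd1 : (RBT.deck q.1.forget).map RBT.norm = (RBT.deck p.1.forget).map RBT.norm := by
    rw [← e_q1, ← e_p1]
    refine rel_map_eq h _ fun a b hab => ?_
    obtain ⟨π, hL, _⟩ := hab
    have := LTree.iso_forget hL
    rw [LTree.forget_map] at this
    exact RBT.norm_eq_of_iso this
  have hd2 : (RBT.deck q.2.forget).map RBT.norm = (RBT.deck p.2.forget).map RBT.norm := by
    rw [← e_q2, ← e_p2]
    refine rel_map_eq h _ fun a b hab => ?_
    obtain ⟨π, _, hR⟩ := hab
    have := LTree.iso_forget hR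
    rw [LTree.forget_map] at this
    exact RBT.norm_eq_of_iso this
  constructor
  · exact RBT.core (by omega) (by omega) hd1
  · exact RBT.core (by omega) (by omega) hd2
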